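/- Fix n ≥ 1, a twice continuously differentiable vector field f : ℝ^D → ℝ^D, a continuously differentiable vector field f₁ : ℝ^D → ℝ^D, and θ₀ ∈ ℝ^D. Then there exist C > 0 and h₀ > 0 such that for every h ∈ (0, h₀) and every solution φ : [0, n h] → ℝ^D of the modified flow φ′(t) = f(φ(t)) + n h f₁(φ(t)) with φ(0) = θ₀, one has ‖φ(n h) − ( θ₀ + n h f(θ₀) + n² h² ( f₁(θ₀) + ½ Df(θ₀)[f(θ₀)] ) )‖ ≤ C h³, where Df(θ₀) denotes the Fréchet derivative (Jacobian) of f at θ₀. -/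

import Mathlib

/-!
Write `τ = n h` and `A = Df(θ₀)`. Along a solution,
`ψ t = φ t - θ₀ - t f θ₀ - t τ f₁ θ₀ - (t² / 2) A (f θ₀)` vanishes at `0`, and
`ψ' t = (f (φ t) - f θ₀ - A (φ t - θ₀)) + A (φ t - θ₀ - t f θ₀) + τ (f₁ (φ t) - f₁ θ₀)`.
For small `τ` a barrier argument keeps `φ t` within distance `M t` of `θ₀`, inside a ball on which
`f` and `f₁` are Lipschitz at `θ₀` and `f` obeys a quadratic Taylor bound. The mean value
inequality then gives `φ t - θ₀ - t f θ₀ = O(τ t)`, so every term of `ψ'` is `O(τ²)` and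
`ψ τ = O(τ³)`.
-/

open Set Filter Topology Asymptotics Metric

section

variable {E F : Type*} [NormedAddCommGroup E] [NormedSpace ℝ E]
  [NormedAddCommGroup F] [NormedSpace ℝ F]

theorem isBigO_sub_sub_fderiv_sq {f : E → F} {x₀ : E}
    (hf : ∀ᶠ x in 𝓝 x₀, DifferentiableAt ℝ f x) (hf' : DifferentiableAt ℝ (fderiv ℝ f) x₀) :
    (fun x => f x - f x₀ - fderiv ℝ f x₀ (x - x₀)) =O[𝓝 x₀] fun x => ‖x - x₀‖ ^ 2 := by
  obtain ⟨c, hc₀, hc⟩ := hf'.isBigO_sub.exists_pos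
  obtain ⟨δ, hδ, hball⟩ := eventually_nhds_iff_ball.1 (hf.and hc.bound)
  refine .of_bound c ?_
  filter_upwards [ball_mem_nhds x₀ hδ] with x hx
  set A := fderiv ℝ f x₀
  have hsub : closedBall x₀ ‖x - x₀‖ ⊆ ball x₀ δ :=
    closedBall_subset_ball (by rwa [← dist_eq_norm, ← mem_ball])
  have hmvt := (convex_closedBall x₀ ‖x - x₀‖).norm_image_sub_le_of_norm_hasFDerivWithin_le
    (f := fun y => f y - A y) (f' := fun y => fderiv ℝ f y - A) (C := c * ‖x - x₀‖)
    (fun y hy => ((hball y (hsub hy)).1.hasFDerivAt.sub A.hasFDerivAt).hasFDerivWithinAt)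
    (fun y hy => (hball y (hsub hy)).2.trans
      (mul_le_mul_of_nonneg_left (mem_closedBall_iff_norm.1 hy) hc₀.le))
    (mem_closedBall_self (norm_nonneg _)) (mem_closedBall_iff_norm.2 le_rfl)
  calc ‖f x - f x₀ - A (x - x₀)‖ = ‖(f x - A x) - (f x₀ - A x₀)‖ := by
        rw [map_sub]; congr 1; abel
    _ ≤ c * ‖x - x₀‖ * ‖x - x₀‖ := hmvt
    _ = c * ‖‖x - x₀‖ ^ 2‖ := by rw [norm_pow, norm_norm]; ring

theorem norm_sub_le_mul_of_norm_deriv_lt {φ φ' : ℝ → E} {x₀ : E} {M T : ℝ} (hM : 0 ≤ M)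
    (hφ : ∀ t ∈ Icc 0 T, HasDerivAt φ (φ' t) t) (hφ0 : φ 0 = x₀)
    (hbound : ∀ t ∈ Ico 0 T, ‖φ t - x₀‖ ≤ M * T → ‖φ' t‖ < M) :
    ∀ t ∈ Icc 0 T, ‖φ t - x₀‖ ≤ M * t :=
  image_norm_le_of_norm_deriv_right_lt_deriv_boundary (f := fun t => φ t - x₀) (B' := fun _ => M)
    (fun t ht => ((hφ t ht).sub_const x₀).continuousAt.continuousWithinAt)
    (fun t ht => ((hφ t (Ico_subset_Icc_self ht)).sub_const x₀).hasDerivWithinAt)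
    (by simp [hφ0]) (fun t => by simpa using (hasDerivAt_id t).const_mul M)
    (fun t ht heq => hbound t ht (heq.trans_le (mul_le_mul_of_nonneg_left ht.2.le hM)))

variable {f f₁ : E → E} {θ₀ : E} {φ : ℝ → E} {τ M L L₁ K r : ℝ}

theorem norm_modifiedFlow_sub_linear_le (hM : 0 ≤ M) (hL : 0 ≤ L)
    (hφ : ∀ t ∈ Icc 0 τ, HasDerivAt φ (f (φ t) + τ • f₁ (φ t)) t) (hφ0 : φ 0 = θ₀)
    (hφM : ∀ t ∈ Icc 0 τ, ‖φ t - θ₀‖ ≤ M * t) (hf₁M : ∀ t ∈ Icc 0 τ, ‖f₁ (φ t)‖ ≤ M)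
    (hfL : ∀ t ∈ Icc 0 τ, ‖f (φ t) - f θ₀‖ ≤ L * ‖φ t - θ₀‖) :
    ∀ t ∈ Icc 0 τ, ‖φ t - θ₀ - t • f θ₀‖ ≤ (L * M + M) * τ * t := by
  have hderiv : ∀ t ∈ Icc 0 τ, HasDerivWithinAt (fun s => φ s - θ₀ - s • f θ₀)
      (f (φ t) + τ • f₁ (φ t) - f θ₀) (Icc 0 τ) t := fun t ht => by
    simpa using
      (((hφ t ht).sub_const θ₀).fun_sub ((hasDerivAt_id' t).smul_const (f θ₀))).hasDerivWithinAt
  have hbound : ∀ t ∈ Ico 0 τ, ‖f (φ t) + τ • f₁ (φ t) - f θ₀‖ ≤ (L * M + M) * τ := by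
    rintro t ⟨ht0, htτ⟩
    have ht : t ∈ Icc 0 τ := ⟨ht0, htτ.le⟩
    calc ‖f (φ t) + τ • f₁ (φ t) - f θ₀‖ ≤ L * (M * t) + τ * M := by
          rw [add_sub_right_comm]
          refine (norm_add_le _ _).trans (add_le_add ((hfL t ht).trans ?_) ?_)
          · exact mul_le_mul_of_nonneg_left (hφM t ht) hL
          · rw [norm_smul, Real.norm_of_nonneg (ht0.trans htτ.le)]
            exact mul_le_mul_of_nonneg_left (hf₁M t ht) (ht0.trans htτ.le)
      _ ≤ (L * M + M) * τ := by nlinarith [mul_nonneg hL hM]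
  intro t ht
  simpa [hφ0] using norm_image_sub_le_of_norm_deriv_le_segment' hderiv hbound t ht

theorem norm_modifiedFlow_sub_expansion_le {A : E →L[ℝ] E} {N : ℝ}
    (hτ : 0 ≤ τ) (hM : 0 ≤ M) (hN : 0 ≤ N) (hK : 0 ≤ K) (hL₁ : 0 ≤ L₁)
    (hφ : ∀ t ∈ Icc 0 τ, HasDerivAt φ (f (φ t) + τ • f₁ (φ t)) t) (hφ0 : φ 0 = θ₀)
    (hφM : ∀ t ∈ Icc 0 τ, ‖φ t - θ₀‖ ≤ M * t)
    (hφN : ∀ t ∈ Icc 0 τ, ‖φ t - θ₀ - t • f θ₀‖ ≤ N * τ * t)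
    (hf₁L : ∀ t ∈ Icc 0 τ, ‖f₁ (φ t) - f₁ θ₀‖ ≤ L₁ * ‖φ t - θ₀‖)
    (hA : ∀ t ∈ Icc 0 τ, ‖f (φ t) - f θ₀ - A (φ t - θ₀)‖ ≤ K * ‖φ t - θ₀‖ ^ 2) :
    ‖φ τ - (θ₀ + τ • f θ₀ + τ ^ 2 • (f₁ θ₀ + (1 / 2 : ℝ) • A (f θ₀)))‖ ≤
      (K * M ^ 2 + ‖A‖ * N + L₁ * M) * τ ^ 3 := by
  set ψ : ℝ → E := fun s => φ s - θ₀ - s • f θ₀ - (s * τ) • f₁ θ₀ - (s ^ 2 / 2) • A (f θ₀)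
  have hderiv : ∀ t ∈ Icc 0 τ, HasDerivWithinAt ψ ((f (φ t) - f θ₀ - A (φ t - θ₀))
      + A (φ t - θ₀ - t • f θ₀) + τ • (f₁ (φ t) - f₁ θ₀)) (Icc 0 τ) t := by
    intro t ht
    have := ((((hφ t ht).sub_const θ₀).fun_sub ((hasDerivAt_id' t).smul_const (f θ₀))).fun_sub
      (((hasDerivAt_id' t).mul_const τ).smul_const (f₁ θ₀))).fun_sub
      (((hasDerivAt_pow 2 t).div_const 2).smul_const (A (f θ₀)))
    refine (this.congr_deriv ?_).hasDerivWithinAt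
    simp only [map_sub, map_smul]
    norm_num
    module
  have hbound : ∀ t ∈ Ico 0 τ, ‖(f (φ t) - f θ₀ - A (φ t - θ₀))
      + A (φ t - θ₀ - t • f θ₀) + τ • (f₁ (φ t) - f₁ θ₀)‖ ≤
        (K * M ^ 2 + ‖A‖ * N + L₁ * M) * τ ^ 2 := by
    rintro t ⟨ht0, htτ⟩
    have ht : t ∈ Icc 0 τ := ⟨ht0, htτ.le⟩
    have hTaylor : ‖f (φ t) - f θ₀ - A (φ t - θ₀)‖ ≤ K * (M * t) ^ 2 :=
      (hA t ht).trans (by gcongr; exact hφM t ht)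
    have hlin : ‖A (φ t - θ₀ - t • f θ₀)‖ ≤ ‖A‖ * (N * τ * t) :=
      (A.le_opNorm _).trans (by gcongr; exact hφN t ht)
    have hpert : ‖τ • (f₁ (φ t) - f₁ θ₀)‖ ≤ τ * (L₁ * (M * t)) := by
      rw [norm_smul, Real.norm_of_nonneg hτ]
      exact mul_le_mul_of_nonneg_left ((hf₁L t ht).trans (by gcongr; exact hφM t ht)) hτ
    calc _ ≤ K * (M * t) ^ 2 + ‖A‖ * (N * τ * t) + τ * (L₁ * (M * t)) :=
          (norm_add₃_le).trans (add_le_add_three hTaylor hlin hpert)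
      _ ≤ (K * M ^ 2 + ‖A‖ * N + L₁ * M) * τ ^ 2 := by
          have : t ^ 2 ≤ τ ^ 2 := by gcongr
          have : τ * t ≤ τ ^ 2 := by nlinarith
          nlinarith [norm_nonneg A, mul_nonneg hK (sq_nonneg M), mul_nonneg (norm_nonneg A) hN,
            mul_nonneg hL₁ hM]
  calc _ = ‖ψ τ - ψ 0‖ := by congr 1; simp only [ψ, hφ0]; module
    _ ≤ (K * M ^ 2 + ‖A‖ * N + L₁ * M) * τ ^ 2 * (τ - 0) :=
        norm_image_sub_le_of_norm_deriv_le_segment' hderiv hbound τ ⟨hτ, le_rfl⟩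
    _ = (K * M ^ 2 + ‖A‖ * N + L₁ * M) * τ ^ 3 := by ring

theorem norm_modifiedFlow_sub_expansion_le_of_closedBall {A : E →L[ℝ] E}
    (hr : 0 ≤ r) (hL : 0 ≤ L) (hL₁ : 0 ≤ L₁) (hK : 0 ≤ K)
    (hfL : ∀ x ∈ closedBall θ₀ r, ‖f x - f θ₀‖ ≤ L * ‖x - θ₀‖)
    (hf₁L : ∀ x ∈ closedBall θ₀ r, ‖f₁ x - f₁ θ₀‖ ≤ L₁ * ‖x - θ₀‖)
    (hA : ∀ x ∈ closedBall θ₀ r, ‖f x - f θ₀ - A (x - θ₀)‖ ≤ K * ‖x - θ₀‖ ^ 2)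
    (hM : ‖f θ₀‖ + L * r + (‖f₁ θ₀‖ + L₁ * r) < M) (hτ : τ ∈ Icc 0 1) (hMτ : M * τ ≤ r)
    (hφ : ∀ t ∈ Icc 0 τ, HasDerivAt φ (f (φ t) + τ • f₁ (φ t)) t) (hφ0 : φ 0 = θ₀) :
    ‖φ τ - (θ₀ + τ • f θ₀ + τ ^ 2 • (f₁ θ₀ + (1 / 2 : ℝ) • A (f θ₀)))‖ ≤
      (K * M ^ 2 + ‖A‖ * (L * M + M) + L₁ * M) * τ ^ 3 := by
  have hball : ∀ x ∈ closedBall θ₀ r, ‖f₁ x‖ ≤ M ∧ ‖f x + τ • f₁ x‖ < M := by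
    intro x hx
    have hxr : ‖x - θ₀‖ ≤ r := mem_closedBall_iff_norm.1 hx
    have hfx : ‖f x‖ ≤ ‖f θ₀‖ + L * r :=
      (norm_le_norm_add_norm_sub' _ _).trans (by gcongr; exact (hfL x hx).trans (by gcongr))
    have hf₁x : ‖f₁ x‖ ≤ ‖f₁ θ₀‖ + L₁ * r :=
      (norm_le_norm_add_norm_sub' _ _).trans (by gcongr; exact (hf₁L x hx).trans (by gcongr))
    have hτf₁x : ‖τ • f₁ x‖ ≤ ‖f₁ x‖ := by
      rw [norm_smul, Real.norm_of_nonneg hτ.1]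
      exact mul_le_of_le_one_left (norm_nonneg _) hτ.2
    constructor
    · linarith [norm_nonneg (f θ₀), mul_nonneg hL hr]
    · linarith [norm_add_le (f x) (τ • f₁ x)]
  have hM0 : 0 ≤ M := by
    linarith [norm_nonneg (f θ₀), norm_nonneg (f₁ θ₀), mul_nonneg hL hr, mul_nonneg hL₁ hr]
  have hφM := norm_sub_le_mul_of_norm_deriv_lt hM0 hφ hφ0 fun t _ ht =>
    (hball _ (mem_closedBall_iff_norm.2 (ht.trans hMτ))).2
  have hin : ∀ t ∈ Icc 0 τ, φ t ∈ closedBall θ₀ r := fun t ht =>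
    mem_closedBall_iff_norm.2 ((hφM t ht).trans ((mul_le_mul_of_nonneg_left ht.2 hM0).trans hMτ))
  have hφN := norm_modifiedFlow_sub_linear_le hM0 hL hφ hφ0 hφM
    (fun t ht => (hball _ (hin t ht)).1) (fun t ht => hfL _ (hin t ht))
  exact norm_modifiedFlow_sub_expansion_le hτ.1 hM0 (by positivity) hK hL₁ hφ hφ0 hφM hφN
    (fun t ht => hf₁L _ (hin t ht)) (fun t ht => hA _ (hin t ht))

theorem exists_norm_modifiedFlow_sub_expansion_le (hf : ContDiffAt ℝ 2 f θ₀)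
    (hf₁ : DifferentiableAt ℝ f₁ θ₀) :
    ∃ C > 0, ∃ τ₀ > 0, ∀ τ ∈ Icc 0 τ₀, ∀ φ : ℝ → E, φ 0 = θ₀ →
      (∀ t ∈ Icc 0 τ, HasDerivAt φ (f (φ t) + τ • f₁ (φ t)) t) →
      ‖φ τ - (θ₀ + τ • f θ₀ + τ ^ 2 • (f₁ θ₀ + (1 / 2 : ℝ) • fderiv ℝ f θ₀ (f θ₀)))‖ ≤
        C * τ ^ 3 := by
  obtain ⟨L, hL, hfL⟩ := (hf.differentiableAt two_ne_zero).isBigO_sub.exists_pos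
  obtain ⟨L₁, hL₁, hf₁L⟩ := hf₁.isBigO_sub.exists_pos
  obtain ⟨K, hK, hA⟩ := (isBigO_sub_sub_fderiv_sq
    ((hf.eventually (by simp)).mono fun x hx => hx.differentiableAt two_ne_zero)
    ((hf.fderiv_right (m := 1) (by norm_num)).differentiableAt one_ne_zero)).exists_pos
  obtain ⟨r, hr, hball⟩ :=
    nhds_basis_closedBall.eventually_iff.1 ((hfL.bound.and hf₁L.bound).and hA.bound)
  set M := ‖f θ₀‖ + L * r + (‖f₁ θ₀‖ + L₁ * r) + 1
  have hM : 0 < M := by positivity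
  refine ⟨K * M ^ 2 + ‖fderiv ℝ f θ₀‖ * (L * M + M) + L₁ * M, by positivity,
    min 1 (r / M), by positivity, fun τ hτ φ hφ0 hφ => ?_⟩
  have hMτ : M * τ ≤ r := (le_div_iff₀' hM).1 (hτ.2.trans (min_le_right _ _))
  exact norm_modifiedFlow_sub_expansion_le_of_closedBall hr.le hL.le hL₁.le hK.le
    (fun x hx => (hball hx).1.1) (fun x hx => (hball hx).1.2)
    (fun x hx => by simpa using (hball hx).2) (lt_add_one _)
    ⟨hτ.1, hτ.2.trans (min_le_left _ _)⟩ hMτ hφ hφ0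

end

theorem modified_flow_expansion {D n : ℕ}
    (f f₁ : EuclideanSpace ℝ (Fin D) → EuclideanSpace ℝ (Fin D))
    (hf : ContDiff ℝ 2 f) (hf₁ : ContDiff ℝ 1 f₁)
    (θ₀ : EuclideanSpace ℝ (Fin D)) :
    ∃ C > (0 : ℝ), ∃ h₀ > (0 : ℝ), ∀ h ∈ Set.Ioo (0 : ℝ) h₀,
      ∀ φ : ℝ → EuclideanSpace ℝ (Fin D),
        φ 0 = θ₀ →
        (∀ t ∈ Set.Icc (0 : ℝ) ((n : ℝ) * h),
          HasDerivAt φ (f (φ t) + ((n : ℝ) * h) • f₁ (φ t)) t) →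
        ‖φ ((n : ℝ) * h)
            - (θ₀ + ((n : ℝ) * h) • f θ₀
                + ((n : ℝ) ^ 2 * h ^ 2) •
                    (f₁ θ₀ + (1 / 2 : ℝ) • fderiv ℝ f θ₀ (f θ₀)))‖
          ≤ C * h ^ 3 := by
  obtain ⟨C, hC, τ₀, hτ₀, hexp⟩ :=
    exists_norm_modifiedFlow_sub_expansion_le hf.contDiffAt (hf₁.differentiable one_ne_zero θ₀)
  refine ⟨C * (n + 1) ^ 3, by positivity, τ₀ / (n + 1), by positivity, ?_⟩
  rintro h ⟨hh0, hh⟩ φ hφ0 hφ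
  have hτ : (n : ℝ) * h ∈ Icc 0 τ₀ := by
    refine ⟨by positivity, ?_⟩
    rw [lt_div_iff₀ (by positivity)] at hh
    nlinarith
  calc _ ≤ C * ((n : ℝ) * h) ^ 3 := by simpa only [mul_pow] using hexp _ hτ φ hφ0 hφ
    _ ≤ C * (n + 1) ^ 3 * h ^ 3 := by
        rw [mul_pow, ← mul_assoc]
        gcongr
        linarith
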